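/- arXiv:1904.12253 — 2 statements merged into one kernel-verified Lean document; each statement's English description precedes it below -/
import Mathlib

section
/- Let A ∈ GL₂(ℤ) be Anosov (no complex eigenvalue of A has absolute value 1), let G = ℤ² ⋊_A ℤ, and let v ∈ ℤ² be a nonzero vector. Then the infinite cyclic subgroup generated by (v, 0) is exponentially distorted in G, i.e. its distortion function in G is equivalent to n ↦ 2ⁿ. -/
/-- The word length of `g` with respect to a generating set `S`: the least `n ≥ 0`
such that `g` is a product of `n` elements of `S ∪ S⁻¹`. -/
noncomputable def wordLength {G : Type*} [Group G] (S : Set G) (g : G) : ℕ :=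
  sInf {n : ℕ | ∃ l : List G, (∀ x ∈ l, x ∈ S ∨ x⁻¹ ∈ S) ∧ l.length = n ∧ l.prod = g}


/-- The distortion function of the subgroup generated by `A` inside the group
generated by `S`: `n ↦ max { |g|_A : g ∈ ⟨A⟩, |g|_S ≤ n }`. -/
noncomputable def distortion {G : Type*} [Group G] (S A : Set G) (n : ℕ) : ℕ :=
  sSup {m : ℕ | ∃ g ∈ Subgroup.closure A, wordLength A g = m ∧ wordLength S g ≤ n}

/-- `f` is dominated by `g`: there are positive constants `A, B, C, D, E` with
`f(x) ≤ A·g(Bx + C) + Dx + E` for all `x`. -/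
def DominatedN (f g : ℕ → ℕ) : Prop :=
  ∃ A B C D E : ℕ, 0 < A ∧ 0 < B ∧ 0 < C ∧ 0 < D ∧ 0 < E ∧
    ∀ n, f n ≤ A * g (B * n + C) + D * n + E

/-- Equivalence of nondecreasing functions: mutual domination. -/
def EquivN (f g : ℕ → ℕ) : Prop := DominatedN f g ∧ DominatedN g f


/-- The additive automorphism of `ℤ²` given by a matrix `A ∈ GL₂(ℤ)`. -/
noncomputable def glAddAut (A : GL (Fin 2) ℤ) : AddAut (Fin 2 → ℤ) where
  toFun v := (A : Matrix (Fin 2) (Fin 2) ℤ).mulVec v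
  invFun v := ((A⁻¹ : GL (Fin 2) ℤ) : Matrix (Fin 2) (Fin 2) ℤ).mulVec v
  left_inv v := by
    dsimp only
    rw [Matrix.mulVec_mulVec, ← Matrix.GeneralLinearGroup.coe_mul, inv_mul_cancel,
      Matrix.GeneralLinearGroup.coe_one, Matrix.one_mulVec]
  right_inv v := by
    dsimp only
    rw [Matrix.mulVec_mulVec, ← Matrix.GeneralLinearGroup.coe_mul, mul_inv_cancel,
      Matrix.GeneralLinearGroup.coe_one, Matrix.one_mulVec]
  map_add' u v := by simp [Matrix.mulVec_add]

/-- The action of the `ℤ` factor on `ℤ²`, sending the generator `1 ∈ ℤ` to `A`. -/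
noncomputable def solHom (A : GL (Fin 2) ℤ) :
    Multiplicative ℤ →* MulAut (Multiplicative (Fin 2 → ℤ)) :=
  zpowersHom _ (AddEquiv.toMultiplicative (glAddAut A))

/-- The semidirect product `ℤ² ⋊_A ℤ`. -/
abbrev SolGroup (A : GL (Fin 2) ℤ) :=
  Multiplicative (Fin 2 → ℤ) ⋊[solHom A] Multiplicative ℤ

/-- The fiber subgroup `ℤ² × {0}` of `ℤ² ⋊_A ℤ`. -/
noncomputable def fiberSubgroup (A : GL (Fin 2) ℤ) : Subgroup (SolGroup A) :=
  (SemidirectProduct.inl : Multiplicative (Fin 2 → ℤ) →* SolGroup A).range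

/-- `A ∈ GL₂(ℤ)` is Anosov if no complex eigenvalue of `A` (i.e. no complex root of
its characteristic polynomial) has absolute value `1`. -/
def IsAnosov (A : GL (Fin 2) ℤ) : Prop :=
  ∀ z : ℂ, ((A : Matrix (Fin 2) (Fin 2) ℤ).map (Int.cast : ℤ → ℂ)).charpoly.IsRoot z →
    ‖z‖ ≠ 1

/-!
Measure `g ∈ ℤ² ⋊_A ℤ` by the `ℓ¹` norm of its `ℤ²`-coordinate. Left multiplication by a letter
`s` of `S` multiplies this norm by at most the entry sum of `A ^ s.right` and adds at most the norm
of `s`, so an element `(kv, 0)` of `S`-length `n` has `|k|` at most exponential in `n`, while its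
`B`-length is at most `|k|` times that of `(v, 0)`. On the fiber, which contains the letters of
`B`, the norm is subadditive, so the `B`-length of `(kv, 0)` is at least a constant times `|k|`.
Conversely, the Anosov condition makes `M = A²`, of determinant `1`, have trace at least `3`, and
then `tr Mⁿ ≥ 2ⁿ` by the Cayley–Hamilton recursion `tr Mⁿ⁺² = tr M · tr Mⁿ⁺¹ - tr Mⁿ`. Since
`Mⁿ + M⁻ⁿ = (tr Mⁿ) • 1`, conjugating `(v, 0)` by `r ^ 2n` and by `r ^ (-2n)`, where
`r = (0, 1)`, and multiplying gives `(tr Mⁿ • v, 0)` as a word of `S`-length `O(n)`.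
-/

section WordLength

variable {G : Type*} [Group G] {S : Set G} {g h : G}

def IsWord (S : Set G) (l : List G) : Prop := ∀ x ∈ l, x ∈ S ∨ x⁻¹ ∈ S

theorem wordLength_prod_le {l : List G} (hl : IsWord S l) : wordLength S l.prod ≤ l.length :=
  Nat.sInf_le ⟨l, hl, rfl, rfl⟩

theorem exists_isWord_length_eq_wordLength (hg : g ∈ Subgroup.closure S) :
    ∃ l, IsWord S l ∧ l.prod = g ∧ l.length = wordLength S g := by
  rw [← Subgroup.mem_toSubmonoid, Subgroup.closure_toSubmonoid] at hg
  obtain ⟨l, hl, rfl⟩ := Submonoid.exists_list_of_mem_closure hg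
  obtain ⟨l', hl', hlen, hprod⟩ := Nat.sInf_mem (⟨l.length, l, hl, rfl, rfl⟩ :
    {n | ∃ l' : List G, IsWord S l' ∧ l'.length = n ∧ l'.prod = l.prod}.Nonempty)
  exact ⟨l', hl', hprod, hlen⟩

theorem wordLength_one : wordLength S 1 = 0 :=
  Nat.eq_zero_of_le_zero (wordLength_prod_le (l := []) (by simp [IsWord]))

theorem wordLength_mul_le (hg : g ∈ Subgroup.closure S) (hh : h ∈ Subgroup.closure S) :
    wordLength S (g * h) ≤ wordLength S g + wordLength S h := by
  obtain ⟨l, hl, rfl, hlen⟩ := exists_isWord_length_eq_wordLength hg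
  obtain ⟨l', hl', rfl, hlen'⟩ := exists_isWord_length_eq_wordLength hh
  rw [← hlen, ← hlen', ← List.length_append, ← List.prod_append]
  exact wordLength_prod_le fun x hx => (List.mem_append.mp hx).elim (hl x) (hl' x)

theorem wordLength_inv_le (hg : g ∈ Subgroup.closure S) : wordLength S g⁻¹ ≤ wordLength S g := by
  obtain ⟨l, hl, rfl, hlen⟩ := exists_isWord_length_eq_wordLength hg
  have hinv : IsWord S (l.map (·⁻¹)).reverse := by
    intro x hx
    obtain ⟨y, hy, rfl⟩ := List.mem_map.mp (List.mem_reverse.mp hx)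
    simpa [or_comm] using hl y hy
  simpa [hlen, List.prod_inv_reverse] using wordLength_prod_le hinv

theorem wordLength_pow_le (hg : g ∈ Subgroup.closure S) (n : ℕ) :
    wordLength S (g ^ n) ≤ n * wordLength S g := by
  induction n with
  | zero => simp [wordLength_one]
  | succ n ih =>
    rw [pow_succ, add_one_mul]
    exact (wordLength_mul_le (pow_mem hg n) hg).trans (by omega)

theorem wordLength_zpow_le (hg : g ∈ Subgroup.closure S) (k : ℤ) :
    wordLength S (g ^ k) ≤ k.natAbs * wordLength S g := by
  cases k with
  | ofNat n => simpa using wordLength_pow_le hg n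
  | negSucc n =>
    rw [zpow_negSucc]
    exact (wordLength_inv_le (pow_mem hg _)).trans (wordLength_pow_le hg _)

theorem wordLength_conj_le (hg : g ∈ Subgroup.closure S) (hh : h ∈ Subgroup.closure S) :
    wordLength S (h * g * h⁻¹) ≤ 2 * wordLength S h + wordLength S g := by
  have hhgh := wordLength_mul_le (mul_mem hh hg) (inv_mem hh)
  have hhg := wordLength_mul_le hh hg
  have hinv := wordLength_inv_le hh
  omega

theorem apply_le_wordLength_mul_pow (N : G → ℕ) {a b : ℕ} (hb : 1 ≤ b) (hN : N 1 = 0)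
    (hstep : ∀ s, s ∈ S ∨ s⁻¹ ∈ S → ∀ h, N (s * h) ≤ a + b * N h)
    (hg : g ∈ Subgroup.closure S) :
    N g ≤ wordLength S g * a * b ^ wordLength S g := by
  obtain ⟨l, hl, rfl, hlen⟩ := exists_isWord_length_eq_wordLength hg
  rw [← hlen]
  clear hlen hg
  induction l with
  | nil => simp [hN]
  | cons s l ih =>
    have ih := ih fun x hx => hl x (List.mem_cons_of_mem s hx)
    have ha : a ≤ a * b ^ (l.length + 1) := Nat.le_mul_of_pos_right a (Nat.one_le_pow _ _ hb)
    rw [List.prod_cons]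
    calc N (s * l.prod) ≤ a + b * (l.length * a * b ^ l.length) :=
          (hstep s (hl s List.mem_cons_self) _).trans (by gcongr)
      _ ≤ a * b ^ (l.length + 1) + l.length * a * b ^ (l.length + 1) := by
          rw [pow_succ] at ha ⊢; linarith
      _ = (s :: l).length * a * b ^ (s :: l).length := by simp; ring

theorem apply_le_wordLength_mul (N : G → ℕ) {a : ℕ} (hN : N 1 = 0)
    (hstep : ∀ s, s ∈ S ∨ s⁻¹ ∈ S → ∀ h, N (s * h) ≤ a + N h)
    (hg : g ∈ Subgroup.closure S) :
    N g ≤ wordLength S g * a := by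
  simpa using apply_le_wordLength_mul_pow N le_rfl hN (by simpa using hstep) hg

theorem exists_forall_le_of_mem_or_inv_mem (S : Finset G) (f : G → ℕ) :
    ∃ M, ∀ s, s ∈ S ∨ s⁻¹ ∈ S → f s ≤ M := by
  obtain ⟨M, hM⟩ := ((S.finite_toSet.union S.finite_toSet.inv).image f).bddAbove
  exact ⟨M, fun s hs => hM ⟨s, hs, rfl⟩⟩

end WordLength

section Distortion

variable {G : Type*} [Group G] {S B : Set G}

theorem distortion_le {n U : ℕ}
    (h : ∀ g ∈ Subgroup.closure B, wordLength S g ≤ n → wordLength B g ≤ U) :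
    distortion S B n ≤ U :=
  csSup_le' fun _ ⟨g, hg, hm, hgn⟩ => hm ▸ h g hg hgn

theorem wordLength_le_distortion {n U : ℕ} {g : G}
    (h : ∀ g ∈ Subgroup.closure B, wordLength S g ≤ n → wordLength B g ≤ U)
    (hg : g ∈ Subgroup.closure B) (hgn : wordLength S g ≤ n) :
    wordLength B g ≤ distortion S B n :=
  le_csSup ⟨U, fun _ ⟨g, hg, hm, hgn⟩ => hm ▸ h g hg hgn⟩ ⟨g, hg, rfl, hgn⟩

theorem dominatedN_distortion_two_pow {c k : ℕ}
    (h : ∀ n, ∀ g ∈ Subgroup.closure B, wordLength S g ≤ n → wordLength B g ≤ c * 2 ^ (k * n)) :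
    DominatedN (distortion S B) (fun n => 2 ^ n) := by
  refine ⟨c + 1, k + 1, 1, 1, 1, by omega, by omega, by omega, by omega, by omega, fun n => ?_⟩
  have hc : c * 2 ^ (k * n) ≤ (c + 1) * 2 ^ ((k + 1) * n + 1) := by
    gcongr <;> [omega; omega; nlinarith]
  have hn := (distortion_le (h n)).trans hc
  dsimp only
  omega

theorem two_pow_dominatedN_distortion {c k d : ℕ}
    (hbdd : ∀ n, ∃ U, ∀ g ∈ Subgroup.closure B, wordLength S g ≤ n → wordLength B g ≤ U)
    (h : ∀ n, ∃ g ∈ Subgroup.closure B, wordLength S g ≤ k * n + d ∧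
      2 ^ n ≤ c * wordLength B g) :
    DominatedN (fun n => 2 ^ n) (distortion S B) := by
  refine ⟨c + 1, k + 1, d + 1, 1, 1, by omega, by omega, by omega, by omega, by omega, fun n => ?_⟩
  obtain ⟨g, hg, hgn, hpow⟩ := h n
  obtain ⟨U, hU⟩ := hbdd ((k + 1) * n + (d + 1))
  have hg' := wordLength_le_distortion hU hg (by nlinarith)
  have hc : c * wordLength B g ≤ (c + 1) * distortion S B ((k + 1) * n + (d + 1)) := by
    gcongr; omega
  dsimp only
  omega

end Distortion

section L1Norm

variable {ι κ : Type*} [Fintype ι] [Fintype κ]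

def l1Norm (w : ι → ℤ) : ℕ := ∑ i, (w i).natAbs

theorem natAbs_le_l1Norm (w : ι → ℤ) (i : ι) : (w i).natAbs ≤ l1Norm w :=
  Finset.single_le_sum (fun j _ => Nat.zero_le (w j).natAbs) (Finset.mem_univ i)

theorem one_le_l1Norm {w : ι → ℤ} (hw : w ≠ 0) : 1 ≤ l1Norm w := by
  obtain ⟨i, hi⟩ := Function.ne_iff.mp hw
  exact (Int.natAbs_pos.mpr hi).trans_le (natAbs_le_l1Norm w i)

theorem l1Norm_add_le (u w : ι → ℤ) : l1Norm (u + w) ≤ l1Norm u + l1Norm w := by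
  rw [l1Norm, l1Norm, l1Norm, ← Finset.sum_add_distrib]
  exact Finset.sum_le_sum fun i _ => Int.natAbs_add_le (u i) (w i)

theorem l1Norm_zsmul (k : ℤ) (w : ι → ℤ) : l1Norm (k • w) = k.natAbs * l1Norm w := by
  simp [l1Norm, Int.natAbs_mul, Finset.mul_sum]

open Matrix in
theorem l1Norm_mulVec_le (M : Matrix κ ι ℤ) (w : ι → ℤ) :
    l1Norm (M *ᵥ w) ≤ (∑ i, l1Norm (M i)) * l1Norm w := by
  rw [Finset.sum_mul]
  refine Finset.sum_le_sum fun i _ => ?_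
  calc ((M *ᵥ w) i).natAbs ≤ ∑ j, (M i j).natAbs * (w j).natAbs := by
        simp only [mulVec, dotProduct]
        exact (Int.natAbs_sum_le _ _).trans_eq (by simp only [Int.natAbs_mul])
    _ ≤ ∑ j, (M i j).natAbs * l1Norm w := by gcongr with j; exact natAbs_le_l1Norm w j
    _ = l1Norm (M i) * l1Norm w := (Finset.sum_mul ..).symm

end L1Norm

namespace Matrix

section CommRing

variable {R : Type*} [CommRing R]

theorem add_adjugate_fin_two (M : Matrix (Fin 2) (Fin 2) R) : M + M.adjugate = M.trace • 1 := by
  ext i j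
  fin_cases i <;> fin_cases j <;> simp [adjugate_fin_two, trace_fin_two, add_comm]

theorem sq_fin_two (M : Matrix (Fin 2) (Fin 2) R) : M ^ 2 = M.trace • M - M.det • 1 := by
  have h := congrArg (M * ·) (add_adjugate_fin_two M)
  simp only [mul_add, mul_adjugate, mul_smul_comm, mul_one] at h
  rw [sq, ← h, add_sub_cancel_right]

theorem trace_pow_add_two_fin_two (M : Matrix (Fin 2) (Fin 2) R) (m : ℕ) :
    (M ^ (m + 2)).trace = M.trace * (M ^ (m + 1)).trace - M.det * (M ^ m).trace := by
  rw [pow_add, sq_fin_two, mul_sub, mul_smul_comm, mul_smul_comm, mul_one, ← pow_succ,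
    trace_sub, trace_smul, trace_smul, smul_eq_mul, smul_eq_mul]

theorem GeneralLinearGroup.val_add_val_inv_fin_two {g : GL (Fin 2) R} (hg : g.val.det = 1) :
    g.val + g⁻¹.val = g.val.trace • 1 := by
  rw [coe_units_inv, inv_def, hg, Ring.inverse_one, one_smul, add_adjugate_fin_two]

end CommRing

theorem GeneralLinearGroup.det_val_sq_eq_one {n : Type*} [Fintype n] [DecidableEq n]
    (A : GL n ℤ) : (A.val ^ 2).det = 1 := by
  rw [det_pow, ← GeneralLinearGroup.val_det_apply, ← Units.val_pow_eq_pow_val, Int.units_sq,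
    Units.val_one]

theorem two_pow_le_trace_pow_fin_two {R : Type*} [CommRing R] [LinearOrder R]
    [IsStrictOrderedRing R] {M : Matrix (Fin 2) (Fin 2) R} (hdet : M.det = 1)
    (htr : 3 ≤ M.trace) (m : ℕ) : 2 ^ m ≤ (M ^ m).trace := by
  suffices ∀ m : ℕ, 2 ^ m ≤ (M ^ m).trace ∧ 2 ^ m ≤ (M ^ (m + 1)).trace - (M ^ m).trace from
    (this m).1
  intro m
  induction m with
  | zero => simp; linarith
  | succ m ih =>
    obtain ⟨h₀, h₁⟩ := ih
    rw [trace_pow_add_two_fin_two, hdet, one_mul, pow_succ]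
    have hpos : (0 : R) < 2 ^ m := pow_pos two_pos m
    have h₃ : 3 * (M ^ (m + 1)).trace ≤ M.trace * (M ^ (m + 1)).trace :=
      mul_le_mul_of_nonneg_right htr (by linarith)
    constructor <;> linarith

end Matrix

theorem Complex.exists_root_norm_eq_one_of_sq_le_four {t : ℝ} (ht : t ^ 2 ≤ 4) :
    ∃ z : ℂ, z ^ 2 - t * z + 1 = 0 ∧ ‖z‖ = 1 := by
  set s := √(4 - t ^ 2) / 2
  have hs : s ^ 2 = 1 - (t / 2) ^ 2 := by
    rw [div_pow, Real.sq_sqrt (by linarith)]; ring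
  refine ⟨⟨t / 2, s⟩, ?_, ?_⟩
  · apply Complex.ext <;> simp [sq] <;> nlinarith
  · rw [Complex.norm_def, Complex.normSq_mk, ← sq, ← sq, hs, add_sub_cancel, Real.sqrt_one]

section Anosov

open Matrix

variable {A : GL (Fin 2) ℤ}

theorem IsAnosov.norm_ne_one (hA : IsAnosov A) {z : ℂ}
    (hz : z ^ 2 - (A.val.trace : ℂ) * z + (A.val.det : ℂ) = 0) : ‖z‖ ≠ 1 :=
  hA z (by simpa [Polynomial.IsRoot, charpoly_fin_two, trace_fin_two, det_fin_two] using hz)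

theorem IsAnosov.three_le_trace_sq (hA : IsAnosov A) : 3 ≤ (A.val ^ 2).trace := by
  have htr : (A.val ^ 2).trace = A.val.trace ^ 2 - 2 * A.val.det := by
    simpa [sq, mul_comm] using trace_pow_add_two_fin_two A.val 0
  rcases Int.isUnit_iff.mp (isUnits_det_units A) with hdet | hdet
  · by_contra! h
    obtain ⟨z, hz, hz1⟩ := Complex.exists_root_norm_eq_one_of_sq_le_four (t := A.val.trace)
      (by exact_mod_cast (show A.val.trace ^ 2 ≤ 4 by linarith))
    exact hA.norm_ne_one (by simpa [hdet] using hz) hz1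
  · have h0 : A.val.trace ≠ 0 := fun h0 =>
      hA.norm_ne_one (z := 1) (by rw [hdet, h0]; norm_num) (by simp)
    nlinarith [Int.one_le_abs h0, sq_abs A.val.trace]

end Anosov

theorem Nat.mul_pow_le_two_pow (n b : ℕ) : n * b ^ n ≤ 2 ^ ((b + 1) * n) := by
  calc n * b ^ n ≤ 2 ^ n * (2 ^ b) ^ n :=
        Nat.mul_le_mul Nat.lt_two_pow_self.le (Nat.pow_le_pow_left Nat.lt_two_pow_self.le n)
    _ = 2 ^ ((b + 1) * n) := by rw [← pow_mul, ← pow_add]; ring_nf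

namespace SolGroup

open Matrix SemidirectProduct Subgroup

variable {A : GL (Fin 2) ℤ}

theorem solHom_ofAdd_apply (e : ℤ) (w : Fin 2 → ℤ) :
    solHom A (.ofAdd e) (.ofAdd w) = .ofAdd ((A ^ e).val *ᵥ w) := by
  let φ : GL (Fin 2) ℤ →* MulAut (Multiplicative (Fin 2 → ℤ)) :=
    { toFun := fun g => AddEquiv.toMultiplicative (glAddAut g)
      map_one' := MulEquiv.ext fun w =>
        show Multiplicative.ofAdd ((1 : GL (Fin 2) ℤ).val *ᵥ w.toAdd) = w by simp
      map_mul' := fun g h => MulEquiv.ext fun w =>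
        show Multiplicative.ofAdd ((g * h).val *ᵥ w.toAdd) =
            Multiplicative.ofAdd (g.val *ᵥ (h.val *ᵥ w.toAdd)) by
          rw [Units.val_mul, mulVec_mulVec] }
  have hφ : solHom A (.ofAdd e) = φ (A ^ e) := by rw [map_zpow]; rfl
  rw [hφ]
  rfl

theorem inr_mul_inl_mul_inr_inv (e : ℤ) (w : Fin 2 → ℤ) :
    (inr (.ofAdd e) * inl (.ofAdd w) * (inr (.ofAdd e))⁻¹ : SolGroup A) =
      inl (.ofAdd ((A ^ e).val *ᵥ w)) := by
  rw [← solHom_ofAdd_apply, inl_aut, map_inv]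

theorem inl_trace_zsmul {e : ℤ} (he : (A ^ e).val.det = 1) (w : Fin 2 → ℤ) :
    (inl (.ofAdd ((A ^ e).val.trace • w)) : SolGroup A) =
      (inr (.ofAdd e) * inl (.ofAdd w) * (inr (.ofAdd e))⁻¹) *
        ((inr (.ofAdd e))⁻¹ * inl (.ofAdd w) * inr (.ofAdd e)) := by
  have hinv : (inr (.ofAdd e))⁻¹ * inl (.ofAdd w) * inr (.ofAdd e) =
      (inr (.ofAdd (-e)) * inl (.ofAdd w) * (inr (.ofAdd (-e)))⁻¹ : SolGroup A) := by
    rw [← map_inv inr, ← map_inv inr, ← ofAdd_neg, ← ofAdd_neg, neg_neg]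
  rw [hinv, inr_mul_inl_mul_inr_inv, inr_mul_inl_mul_inr_inv, ← map_mul, ← ofAdd_add,
    ← add_mulVec, _root_.zpow_neg, GeneralLinearGroup.val_add_val_inv_fin_two he, smul_mulVec,
    one_mulVec]

theorem wordLength_inl_trace_pow_zsmul_le {S : Set (SolGroup A)} (hS : closure S = ⊤)
    (w : Fin 2 → ℤ) (n : ℕ) :
    wordLength S (inl (.ofAdd (((A.val ^ 2) ^ n).trace • w))) ≤
      8 * wordLength S (inr (.ofAdd 1)) * n + 2 * wordLength S (inl (.ofAdd w)) := by
  have hmem : ∀ g, g ∈ closure S := fun g => hS ▸ mem_top g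
  have hpow : (A ^ (2 * n : ℤ)).val = (A.val ^ 2) ^ n := by
    rw [_root_.zpow_mul, zpow_natCast, zpow_ofNat, Units.val_pow_eq_pow_val,
      Units.val_pow_eq_pow_val]
  have hdet : (A ^ (2 * n : ℤ)).val.det = 1 := by
    rw [hpow, det_pow, GeneralLinearGroup.det_val_sq_eq_one, one_pow]
  have hxy : (inl (.ofAdd (((A.val ^ 2) ^ n).trace • w)) : SolGroup A) =
      (inr (.ofAdd 1) ^ (2 * n : ℤ) * inl (.ofAdd w) * (inr (.ofAdd 1) ^ (2 * n : ℤ))⁻¹) *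
        ((inr (.ofAdd 1) ^ (2 * n : ℤ))⁻¹ * inl (.ofAdd w) *
          (inr (.ofAdd 1) ^ (2 * n : ℤ))⁻¹⁻¹) := by
    rw [inv_inv, ← map_zpow, ← ofAdd_zsmul, smul_eq_mul, mul_one, ← hpow, inl_trace_zsmul hdet]
  set x : SolGroup A := inl (.ofAdd w)
  set y : SolGroup A := inr (.ofAdd 1) ^ (2 * n : ℤ)
  have hy : wordLength S y ≤ 2 * n * wordLength S (inr (.ofAdd 1)) := by
    simpa [show (2 * n : ℤ).natAbs = 2 * n by omega] using wordLength_zpow_le (hmem _) (2 * n)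
  calc wordLength S (inl (.ofAdd (((A.val ^ 2) ^ n).trace • w)))
      ≤ wordLength S (y * x * y⁻¹) + wordLength S (y⁻¹ * x * y⁻¹⁻¹) :=
        hxy ▸ wordLength_mul_le (hmem _) (hmem _)
    _ ≤ (2 * wordLength S y + wordLength S x) + (2 * wordLength S y⁻¹ + wordLength S x) :=
        add_le_add (wordLength_conj_le (hmem x) (hmem y)) (wordLength_conj_le (hmem x) (hmem _))
    _ ≤ 8 * wordLength S (inr (.ofAdd 1)) * n + 2 * wordLength S x := by
        linarith [wordLength_inv_le (hmem y)]

def fiberNorm (g : SolGroup A) : ℕ := l1Norm g.left.toAdd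

theorem fiberNorm_one : fiberNorm (1 : SolGroup A) = 0 := by
  simp [fiberNorm, l1Norm]

theorem fiberNorm_mul_le (g h : SolGroup A) :
    fiberNorm (g * h) ≤ fiberNorm g + (∑ i, l1Norm ((A ^ g.right.toAdd).val i)) * fiberNorm h := by
  rw [fiberNorm, mul_left, toAdd_mul, ← ofAdd_toAdd g.right, ← ofAdd_toAdd h.left,
    solHom_ofAdd_apply, toAdd_ofAdd, toAdd_ofAdd]
  exact (l1Norm_add_le _ _).trans (Nat.add_le_add_left (l1Norm_mulVec_le _ _) _)

theorem fiberNorm_mul_le_of_mem_fiberSubgroup {g : SolGroup A} (hg : g ∈ fiberSubgroup A)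
    (h : SolGroup A) : fiberNorm (g * h) ≤ fiberNorm g + fiberNorm h := by
  obtain ⟨u, rfl⟩ := hg
  simpa [fiberNorm] using l1Norm_add_le _ _

theorem fiberNorm_inl_zpow (v : Fin 2 → ℤ) (k : ℤ) :
    fiberNorm ((inl (.ofAdd v) : SolGroup A) ^ k) = k.natAbs * l1Norm v := by
  rw [← map_zpow, ← ofAdd_zsmul, fiberNorm, left_inl, toAdd_ofAdd, l1Norm_zsmul]

theorem exists_fiberNorm_le_two_pow (S : Finset (SolGroup A)) :
    ∃ a b, ∀ g ∈ closure (S : Set (SolGroup A)), fiberNorm g ≤ a * 2 ^ (b * wordLength ↑S g) := by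
  obtain ⟨a, ha⟩ := exists_forall_le_of_mem_or_inv_mem S fiberNorm
  obtain ⟨b, hb⟩ := exists_forall_le_of_mem_or_inv_mem S fun s =>
    ∑ i, l1Norm ((A ^ s.right.toAdd).val i)
  refine ⟨a, b + 2, fun g hg => ?_⟩
  have hstep : ∀ s, s ∈ (S : Set (SolGroup A)) ∨ s⁻¹ ∈ (S : Set (SolGroup A)) →
      ∀ h, fiberNorm (s * h) ≤ a + (b + 1) * fiberNorm h := fun s hs h =>
    (fiberNorm_mul_le s h).trans (by gcongr; exacts [ha s hs, (hb s hs).trans (by omega)])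
  calc fiberNorm g ≤ wordLength ↑S g * a * (b + 1) ^ wordLength ↑S g :=
        apply_le_wordLength_mul_pow fiberNorm (by omega) fiberNorm_one hstep hg
    _ ≤ a * 2 ^ ((b + 2) * wordLength ↑S g) := by
        rw [mul_comm _ a, mul_assoc]; gcongr; exact Nat.mul_pow_le_two_pow _ _

theorem exists_fiberNorm_le_wordLength_mul (B : Finset (SolGroup A))
    (hB : closure (B : Set (SolGroup A)) ≤ fiberSubgroup A) :
    ∃ a, ∀ g ∈ closure (B : Set (SolGroup A)), fiberNorm g ≤ wordLength ↑B g * a := by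
  obtain ⟨a, ha⟩ := exists_forall_le_of_mem_or_inv_mem B fiberNorm
  have hfiber : ∀ s, s ∈ (B : Set (SolGroup A)) ∨ s⁻¹ ∈ (B : Set (SolGroup A)) →
      s ∈ fiberSubgroup A := fun s hs =>
    hs.elim (fun h => hB (subset_closure h)) fun h => by simpa using inv_mem (hB (subset_closure h))
  exact ⟨a, fun g hg => apply_le_wordLength_mul fiberNorm fiberNorm_one (fun s hs h =>
    (fiberNorm_mul_le_of_mem_fiberSubgroup (hfiber s hs) h).trans (by gcongr; exact ha s hs)) hg⟩

theorem exists_wordLength_le_mul_two_pow {v : Fin 2 → ℤ} (hv : v ≠ 0) {S : Finset (SolGroup A)}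
    (hS : closure (S : Set (SolGroup A)) = ⊤) {B : Set (SolGroup A)}
    (hB : closure B = zpowers (inl (.ofAdd v))) :
    ∃ c k, ∀ n, ∀ g ∈ closure B, wordLength ↑S g ≤ n → wordLength B g ≤ c * 2 ^ (k * n) := by
  obtain ⟨a, b, hab⟩ := exists_fiberNorm_le_two_pow S
  have hx : inl (.ofAdd v) ∈ closure B := hB ▸ mem_zpowers _
  refine ⟨wordLength B (inl (.ofAdd v)) * a, b, fun n g hg hgn => ?_⟩
  obtain ⟨k, rfl⟩ := mem_zpowers_iff.mp (hB ▸ hg)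
  have hk : k.natAbs ≤ a * 2 ^ (b * n) :=
    calc k.natAbs ≤ k.natAbs * l1Norm v := Nat.le_mul_of_pos_right _ (one_le_l1Norm hv)
      _ = fiberNorm (inl (.ofAdd v) ^ k : SolGroup A) := (fiberNorm_inl_zpow v k).symm
      _ ≤ a * 2 ^ (b * n) := (hab _ (hS ▸ mem_top _)).trans (by gcongr; omega)
  calc wordLength B (inl (.ofAdd v) ^ k) ≤ k.natAbs * wordLength B (inl (.ofAdd v)) :=
        wordLength_zpow_le hx k
    _ ≤ wordLength B (inl (.ofAdd v)) * a * 2 ^ (b * n) := by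
        rw [mul_comm, mul_assoc]; gcongr

theorem exists_two_pow_le_mul_wordLength (hA : IsAnosov A) {v : Fin 2 → ℤ} (hv : v ≠ 0)
    {S : Finset (SolGroup A)} (hS : closure (S : Set (SolGroup A)) = ⊤) {B : Finset (SolGroup A)}
    (hB : closure (B : Set (SolGroup A)) = zpowers (inl (.ofAdd v))) :
    ∃ c k d, ∀ n, ∃ g ∈ closure (B : Set (SolGroup A)),
      wordLength ↑S g ≤ k * n + d ∧ 2 ^ n ≤ c * wordLength ↑B g := by
  set x : SolGroup A := inl (.ofAdd v)
  obtain ⟨a, ha⟩ := exists_fiberNorm_le_wordLength_mul B (hB ▸ zpowers_le.mpr ⟨.ofAdd v, rfl⟩)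
  refine ⟨a, 8 * wordLength (S : Set (SolGroup A)) (inr (.ofAdd 1)),
    2 * wordLength (S : Set (SolGroup A)) x, fun n => ?_⟩
  set t := ((A.val ^ 2) ^ n).trace
  have ht : 2 ^ n ≤ t.natAbs := by
    have h := (two_pow_le_trace_pow_fin_two (GeneralLinearGroup.det_val_sq_eq_one A)
      hA.three_le_trace_sq n).trans Int.le_natAbs
    exact_mod_cast h
  have hxt : x ^ t = inl (.ofAdd (t • v)) := by rw [← map_zpow, ← ofAdd_zsmul]
  have hmem : x ^ t ∈ closure (B : Set (SolGroup A)) := hB ▸ zpow_mem (mem_zpowers x) t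
  refine ⟨x ^ t, hmem, hxt ▸ wordLength_inl_trace_pow_zsmul_le hS v n, ?_⟩
  calc 2 ^ n ≤ t.natAbs * l1Norm v := ht.trans (Nat.le_mul_of_pos_right _ (one_le_l1Norm hv))
    _ = fiberNorm (x ^ t) := (fiberNorm_inl_zpow v t).symm
    _ ≤ a * wordLength ↑B (x ^ t) := (ha _ hmem).trans_eq (mul_comm _ _)

end SolGroup

/-- For `A ∈ GL₂(ℤ)` Anosov and `v ∈ ℤ²` nonzero, the infinite
cyclic subgroup of `G = ℤ² ⋊_A ℤ` generated by `(v, 0)` is exponentially distorted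
in `G`: its distortion function is equivalent to `n ↦ 2ⁿ`. -/
theorem cyclic_fiber_subgroup_exponentially_distorted (A : GL (Fin 2) ℤ) (hAn : IsAnosov A)
    (v : Fin 2 → ℤ) (hv : v ≠ 0)
    (S : Finset (SolGroup A)) (hS : Subgroup.closure (S : Set (SolGroup A)) = ⊤)
    (B : Finset (SolGroup A))
    (hB : Subgroup.closure (B : Set (SolGroup A)) =
      Subgroup.zpowers (SemidirectProduct.inl (Multiplicative.ofAdd v) : SolGroup A)) :
    EquivN (distortion (S : Set (SolGroup A)) (B : Set (SolGroup A))) (fun n => 2 ^ n) := by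
  obtain ⟨c, k, hup⟩ := SolGroup.exists_wordLength_le_mul_two_pow hv hS hB
  obtain ⟨c', k', d, hlow⟩ := SolGroup.exists_two_pow_le_mul_wordLength hAn hv hS hB
  exact ⟨dominatedN_distortion_two_pow hup,
    two_pow_dominatedN_distortion (fun n => ⟨_, hup n⟩) hlow⟩
end

section
/- Let G be a finitely generated group equipped with the word metric d coming from a finite generating set, and let H and K be (not necessarily finitely generated) subgroups of G. Then for each constant r > 0 there is a constant r' = r'(G, d, H, K, r) > 0 such that every element g ∈ G lying within distance r of H and within distance r of K (with respect to d) lies within distance r' of the intersection H ∩ K. -/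
/-- The set of elements represented by a word of length at most `r` over a finite
alphabet-condition is finite. -/
lemma ball_finite {G : Type*} [Group G] (S : Finset G) :
    ∀ r : ℕ, {g : G | ∃ l : List G,
      (∀ x ∈ l, x ∈ (S : Set G) ∨ x⁻¹ ∈ (S : Set G)) ∧ l.length ≤ r ∧ l.prod = g}.Finite := by
  intro r
  induction r with
  | zero =>
    apply Set.Finite.subset (Set.finite_singleton (1 : G))
    rintro g ⟨l, -, hlen, hprod⟩
    have : l = [] := List.length_eq_zero_iff.mp (Nat.le_zero.mp hlen)
    simp [this] at hprod
    simp [← hprod]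
  | succ n ih =>
    have hT : ({x : G | x ∈ (S : Set G) ∨ x⁻¹ ∈ (S : Set G)}).Finite := by
      apply Set.Finite.subset (S.finite_toSet.union (S.finite_toSet.inv))
      rintro x (hx | hx)
      · exact Or.inl hx
      · exact Or.inr (Set.mem_inv.mpr hx)
    apply Set.Finite.subset
      (Set.Finite.insert 1 (((hT.prod ih).image (fun p : G × G => p.1 * p.2))))
    rintro g ⟨l, hl, hlen, hprod⟩
    match l with
    | [] => simp at hprod; simp [← hprod]
    | x :: l' =>
      right
      refine ⟨(x, l'.prod), ⟨hl x (by simp), ⟨l', fun y hy => hl y (by simp [hy]),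
        (by simpa using hlen), rfl⟩⟩, by simpa using hprod⟩

/-- Hruska, Proposition 9.4. Let `G` be a finitely generated group
with the word metric `d(g, h) = |g⁻¹h|_S` coming from a finite generating set `S`,
and let `H, K` be subgroups of `G`. For each `r > 0` there is `r' > 0` such that
every `g ∈ G` within distance `r` of `H` and within distance `r` of `K` lies within
distance `r'` of `H ∩ K`. -/
theorem neighborhood_intersection_subgroups {G : Type*} [Group G]
    (S : Finset G) (hS : Subgroup.closure (S : Set G) = ⊤)
    (H K : Subgroup G) :
    ∀ r : ℕ, 0 < r → ∃ r' : ℕ, 0 < r' ∧ ∀ g : G,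
      (∃ h ∈ H, wordLength (S : Set G) (g⁻¹ * h) ≤ r) →
      (∃ k ∈ K, wordLength (S : Set G) (g⁻¹ * k) ≤ r) →
      ∃ x ∈ H ⊓ K, wordLength (S : Set G) (g⁻¹ * x) ≤ r' := by
  classical
  intro r _
  -- every element has some word representation
  have hrep : ∀ g : G, {n : ℕ | ∃ l : List G,
      (∀ x ∈ l, x ∈ (S : Set G) ∨ x⁻¹ ∈ (S : Set G)) ∧ l.length = n ∧ l.prod = g}.Nonempty := by
    intro g
    have hg : g ∈ (Subgroup.closure (S : Set G)).toSubmonoid := by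
      rw [hS]; trivial
    rw [Subgroup.closure_toSubmonoid] at hg
    obtain ⟨l, hl, hprod⟩ := Submonoid.exists_list_of_mem_closure hg
    refine ⟨l.length, l, ?_, rfl, hprod⟩
    intro x hx
    rcases hl x hx with h | h
    · exact Or.inl h
    · exact Or.inr h
  -- the ball of radius r
  set B : Set G := {g : G | ∃ l : List G,
      (∀ x ∈ l, x ∈ (S : Set G) ∨ x⁻¹ ∈ (S : Set G)) ∧ l.length ≤ r ∧ l.prod = g} with hB
  have hBfin : B.Finite := ball_finite S r
  have hmemB : ∀ g : G, wordLength (S : Set G) g ≤ r → g ∈ B := by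
    intro g hg
    have := Nat.sInf_mem (hrep g)
    obtain ⟨l, hl, hlen, hprod⟩ := this
    exact ⟨l, hl, hlen ▸ hg, hprod⟩
  -- for each pair of ball elements, pick a base point if one exists
  let C : G × G → Prop := fun p => ∃ g₀ : G, g₀ * p.1 ∈ H ∧ g₀ * p.2 ∈ K
  let f : G × G → G := fun p => if h : C p then h.choose else 1
  let Bf := hBfin.toFinset
  refine ⟨1 + Finset.sup (Bf ×ˢ Bf) (fun p => wordLength (S : Set G) (f p)⁻¹),
    Nat.lt_of_lt_of_le Nat.zero_lt_one (Nat.le_add_right 1 _), ?_⟩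
  rintro g ⟨h, hH, hwh⟩ ⟨k, hK, hwk⟩
  have hsB : g⁻¹ * h ∈ Bf := hBfin.mem_toFinset.mpr (hmemB _ hwh)
  have htB : g⁻¹ * k ∈ Bf := hBfin.mem_toFinset.mpr (hmemB _ hwk)
  have hC : C (g⁻¹ * h, g⁻¹ * k) :=
    ⟨g, by simpa using hH, by simpa using hK⟩
  have hf : f (g⁻¹ * h, g⁻¹ * k) = hC.choose := dif_pos hC
  set g₀ := hC.choose with hg₀
  obtain ⟨hg₀H, hg₀K⟩ := hC.choose_spec
  refine ⟨g * g₀⁻¹, ?_, ?_⟩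
  · constructor
    · have : g * g₀⁻¹ = (g * (g⁻¹ * h)) * (g₀ * (g⁻¹ * h))⁻¹ := by group
      rw [this]
      exact H.mul_mem (by simpa using hH) (H.inv_mem hg₀H)
    · have : g * g₀⁻¹ = (g * (g⁻¹ * k)) * (g₀ * (g⁻¹ * k))⁻¹ := by group
      rw [this]
      exact K.mul_mem (by simpa using hK) (K.inv_mem hg₀K)
  · have hx : g⁻¹ * (g * g₀⁻¹) = g₀⁻¹ := by group
    rw [hx]
    calc wordLength (S : Set G) g₀⁻¹
        = wordLength (S : Set G) (f (g⁻¹ * h, g⁻¹ * k))⁻¹ := by rw [hf]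
      _ ≤ Finset.sup (Bf ×ˢ Bf) (fun p => wordLength (S : Set G) (f p)⁻¹) :=
          Finset.le_sup (f := fun p => wordLength (S : Set G) (f p)⁻¹) (Finset.mem_product.mpr ⟨hsB, htB⟩)
      _ ≤ 1 + _ := Nat.le_add_left _ 1
end
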